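/- The number of basketballs of order n equals (1/(3n+1)) * C(4n, n), i.e., the number of noncrossing partitions of {0,...,4n-1} into n blocks of size 4. -/

import Mathlib

open scoped Classical

def IsMatchingOn (M : Finset (Finset ℕ)) (S : Finset ℕ) : Prop :=
  (∀ b ∈ M, b.card = 2) ∧
  (∀ b ∈ M, ∀ b' ∈ M, b ≠ b' → Disjoint b b') ∧
  (∀ x, x ∈ S ↔ ∃ b ∈ M, x ∈ b)

def Cross (e o : Finset ℕ) : Prop :=
  (∃ i ∈ e, ∃ k ∈ e, ∃ j ∈ o, ∃ l ∈ o, i < j ∧ j < k ∧ k < l) ∨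
  (∃ i ∈ o, ∃ k ∈ o, ∃ j ∈ e, ∃ l ∈ e, i < j ∧ j < k ∧ k < l)

def IsNCMatchingOn (M : Finset (Finset ℕ)) (S : Finset ℕ) : Prop :=
  IsMatchingOn M S ∧ ∀ b ∈ M, ∀ b' ∈ M, b ≠ b' → ¬ Cross b b'

def En (n : ℕ) : Finset ℕ := (Finset.range (2 * n)).image (fun i => 2 * i)

def On (n : ℕ) : Finset ℕ := (Finset.range (2 * n)).image (fun i => 2 * i + 1)

def IsBasketball (n : ℕ) (Be Bo : Finset (Finset ℕ)) : Prop :=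
  IsNCMatchingOn Be (En n) ∧ IsNCMatchingOn Bo (On n) ∧
  ∀ e ∈ Be, (Bo.filter (fun o => Cross e o)).card = 1

def IsNCPartitionOn (Q : Finset (Finset ℕ)) (S : Finset ℕ) : Prop :=
  (∀ b ∈ Q, b.Nonempty) ∧
  (∀ b ∈ Q, ∀ b' ∈ Q, b ≠ b' → Disjoint b b') ∧
  (∀ x, x ∈ S ↔ ∃ b ∈ Q, x ∈ b) ∧
  (∀ b ∈ Q, ∀ b' ∈ Q, b ≠ b' → ¬ Cross b b')

noncomputable def basketballs (n : ℕ) : Finset (Finset (Finset ℕ) × Finset (Finset ℕ)) :=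
  ((Finset.range (4 * n)).powerset.powerset ×ˢ (Finset.range (4 * n)).powerset.powerset).filter
    (fun B => IsBasketball n B.1 B.2)

noncomputable def ncQuadPartitions (n : ℕ) : Finset (Finset (Finset ℕ)) :=
  (Finset.range (4 * n)).powerset.powerset.filter
    (fun Q => IsNCPartitionOn Q (Finset.range (4 * n)) ∧ Q.card = n ∧ ∀ b ∈ Q, b.card = 4)

/-!
Joining each even arc of a basketball with the odd arc it crosses gives a noncrossing partition
into blocks of size four. Every odd arc is crossed at all by parity: strictly inside it lie an
odd number of points, the odd ones pair up among themselves, and an even arc not crossing it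
contributes zero or two points; double counting then makes the crossing relation a perfect
matching. Conversely, in a noncrossing partition into four-element blocks the points between two
consecutive points of a block form whole blocks, so consecutive points of a block differ in
parity, and each block splits into a crossing even pair and odd pair.

Such a partition is determined by its set of block minima, and these sets are exactly the
`n`-subsets `O` of `[0, 4n)` with `t ≤ 4 |O ∩ [0, t)|` for all `t` (induct by removing the block
with the largest minimum, which is an interval). By the cycle lemma exactly one of the `4n + 1`
rotations of an `n`-subset of `ℤ/(4n + 1)` is of this kind, so there are
`C(4n + 1, n) / (4n + 1) = C(4n, n) / (3n + 1)` of them.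
-/

open Finset

section CycleLemma
variable {k n N : ℕ} {A : Finset ℕ}

def IsBallot (k n : ℕ) (A : Finset ℕ) : Prop := ∀ t ≤ k * n, t ≤ k * #(A ∩ range t)

noncomputable def ballotSets (k n : ℕ) : Finset (Finset ℕ) :=
  ((range (k * n)).powersetCard n).filter (IsBallot k n)

noncomputable def periodicCount (N : ℕ) (A : Finset ℕ) (m : ℕ) : ℕ :=
  #((range m).filter (fun i => i % N ∈ A))

/-- `A ⊆ range N`, read cyclically starting from position `j`. -/
noncomputable def rotate (N j : ℕ) (A : Finset ℕ) : Finset ℕ :=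
  (range N).filter (fun x => (x + j) % N ∈ A)

theorem periodicCount_add (A : Finset ℕ) (j t : ℕ) : periodicCount N A (j + t) =
    periodicCount N A j + #((range t).filter (fun x => (x + j) % N ∈ A)) := by
  rw [periodicCount, periodicCount, card_filter, card_filter, card_filter, sum_range_add]
  simp only [add_comm j]

theorem rotate_rotate (A : Finset ℕ) (i j : ℕ) :
    rotate N i (rotate N j A) = rotate N (i + j) A := by
  ext x
  simp only [rotate, mem_filter, mem_range, Nat.mod_add_mod, add_assoc]
  exact ⟨fun h => ⟨h.1, h.2.2⟩, fun h => ⟨h.1, Nat.mod_lt _ (by omega), h.2⟩⟩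

theorem rotate_of_dvd (hA : A ⊆ range N) {j : ℕ} (hj : N ∣ j) : rotate N j A = A := by
  ext x
  simp only [rotate, mem_filter, mem_range, Nat.add_mod, Nat.mod_eq_zero_of_dvd hj, add_zero,
    Nat.mod_mod]
  constructor
  · rintro ⟨hx, hxA⟩
    rwa [Nat.mod_eq_of_lt hx] at hxA
  · intro hxA
    have hx := mem_range.mp (hA hxA)
    exact ⟨hx, by rwa [Nat.mod_eq_of_lt hx]⟩

theorem rotate_subset_range (j : ℕ) : rotate N j A ⊆ range N := filter_subset _ _

theorem card_rotate_le (A : Finset ℕ) (j : ℕ) : #(rotate N j A) ≤ #A := by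
  refine card_le_card_of_injOn (fun x => (x + j) % N) (fun x hx => (mem_filter.mp hx).2) ?_
  intro x hx y hy hxy
  have hx := mem_range.mp (mem_filter.mp hx).1
  have hy := mem_range.mp (mem_filter.mp hy).1
  have := Nat.ModEq.add_right_cancel' j hxy
  rwa [Nat.ModEq, Nat.mod_eq_of_lt hx, Nat.mod_eq_of_lt hy] at this

theorem card_rotate (hA : A ⊆ range N) (j : ℕ) : #(rotate N j A) = #A := by
  rcases Nat.eq_zero_or_pos N with rfl | hN
  · simp [rotate, subset_empty.mp (by simpa using hA)]
  refine (card_rotate_le A j).antisymm ?_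
  have hinv : rotate N (N * j - j) (rotate N j A) = A := by
    rw [rotate_rotate, rotate_of_dvd hA ⟨j, Nat.sub_add_cancel (Nat.le_mul_of_pos_left j hN)⟩]
  calc #A = #(rotate N (N * j - j) (rotate N j A)) := by rw [hinv]
    _ ≤ #(rotate N j A) := card_rotate_le _ _

theorem periodicCount_add_period (hA : A ⊆ range N) (m : ℕ) :
    periodicCount N A (m + N) = periodicCount N A m + #A := by
  rw [periodicCount_add, ← card_rotate hA m, rotate]

theorem periodicCount_add_eq_card_rotate_inter_range (j : ℕ) {t : ℕ} (ht : t ≤ N) :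
    periodicCount N A (j + t) = periodicCount N A j + #(rotate N j A ∩ range t) := by
  rw [periodicCount_add]
  congr 2
  ext x
  simp only [rotate, mem_inter, mem_filter, mem_range]
  constructor
  · rintro ⟨hx, h⟩; exact ⟨⟨by omega, h⟩, hx⟩
  · rintro ⟨⟨-, h⟩, hx⟩; exact ⟨hx, h⟩

noncomputable def ballotWalk (k N : ℕ) (A : Finset ℕ) (m : ℕ) : ℤ := k * periodicCount N A m - m

def IsCyclicLowPoint (k N : ℕ) (A : Finset ℕ) (j : ℕ) : Prop :=
  ∀ t < N, ballotWalk k N A j ≤ ballotWalk k N A (j + t)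

theorem ballotWalk_add_period (hN : N = k * n + 1) (hA : A ⊆ range N) (hcard : #A = n)
    (m : ℕ) : ballotWalk k N A (m + N) = ballotWalk k N A m - 1 := by
  simp only [ballotWalk, periodicCount_add_period hA, hcard]
  push_cast [hN]
  ring

theorem isBallot_rotate_iff (hN : N = k * n + 1) (j : ℕ) :
    IsBallot k n (rotate N j A) ↔ IsCyclicLowPoint k N A j := by
  have key (t : ℕ) (ht : t ≤ k * n) : t ≤ k * #(rotate N j A ∩ range t) ↔
      ballotWalk k N A j ≤ ballotWalk k N A (j + t) := by
    rw [ballotWalk, ballotWalk, periodicCount_add_eq_card_rotate_inter_range j (by omega)]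
    push_cast
    constructor <;> intro h <;> zify at h ⊢ <;> linarith
  exact ⟨fun h t ht => (key t (by omega)).mp (h t (by omega)),
    fun h t ht => (key t ht).mpr (h t (by omega))⟩

theorem IsCyclicLowPoint.not_lt (hN : N = k * n + 1) (hA : A ⊆ range N) (hcard : #A = n)
    {a b : ℕ} (hb : b < N) (ha : IsCyclicLowPoint k N A a) (hb' : IsCyclicLowPoint k N A b) :
    ¬ a < b := by
  intro hab
  have h1 := ha (b - a) (by omega)
  have h2 := hb' (a + N - b) (by omega)
  rw [Nat.add_sub_cancel' hab.le] at h1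
  rw [Nat.add_sub_cancel' (by omega), ballotWalk_add_period hN hA hcard] at h2
  omega

theorem existsUnique_isCyclicLowPoint (hN : N = k * n + 1) (hA : A ⊆ range N) (hcard : #A = n) :
    ∃! j, j < N ∧ IsCyclicLowPoint k N A j := by
  have hperiod := ballotWalk_add_period hN hA hcard
  -- the first minimum of the walk on one period
  obtain ⟨j, hj, hmin⟩ := exists_min_image (range N) (fun m => toLex (ballotWalk k N A m, m))
    ⟨0, mem_range.mpr (by omega)⟩
  simp only [mem_range, Prod.Lex.le_iff, ofLex_toLex] at hj hmin
  have hlow : IsCyclicLowPoint k N A j := fun t ht => by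
    rcases Nat.lt_or_ge (j + t) N with h | h
    · rcases hmin _ h with h' | h' <;> omega
    · have := hperiod (j + t - N)
      rw [Nat.sub_add_cancel h] at this
      rcases hmin (j + t - N) (by omega) with h' | h' <;> omega
  refine ⟨j, ⟨hj, hlow⟩, fun j' ⟨hj', hlow'⟩ => ?_⟩
  have := hlow'.not_lt hN hA hcard hj hlow
  have := hlow.not_lt hN hA hcard hj' hlow'
  omega

theorem IsBallot.subset_range (hk : 0 < k) (h : IsBallot k n A) (hcard : #A = n) :
    A ⊆ range (k * n) := by
  have hn : n ≤ #(A ∩ range (k * n)) := Nat.le_of_mul_le_mul_left (h _ le_rfl) hk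
  have : A ∩ range (k * n) = A := eq_of_subset_of_card_le inter_subset_left (by omega)
  exact this ▸ inter_subset_right

theorem mem_ballotSets : A ∈ ballotSets k n ↔ A ⊆ range (k * n) ∧ #A = n ∧ IsBallot k n A := by
  rw [ballotSets, mem_filter, mem_powersetCard, and_assoc]

theorem card_ballotSets_mul (hk : 0 < k) (n : ℕ) :
    #(ballotSets k n) * (k * n + 1) = (k * n + 1).choose n := by
  set N := k * n + 1 with hN
  have hrot_rot {G : Finset ℕ} (hG : G ⊆ range N) {j : ℕ} (hj : j < N) :
      rotate N j (rotate N (N - j) G) = G := by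
    rw [rotate_rotate, rotate_of_dvd hG ⟨1, by omega⟩]
  rw [← card_range N, ← card_product, ← card_powersetCard]
  -- `(G, j)` is sent to the set whose unique cyclic low point is `j`, read from there as `G`
  refine card_nbij (fun p => rotate N (N - p.2) p.1) ?_ ?_ ?_
  · rintro ⟨G, j⟩ hp
    obtain ⟨hG, -⟩ := mem_product.mp hp
    obtain ⟨hGsub, hGcard, -⟩ := mem_ballotSets.mp hG
    have hGsub' : G ⊆ range N := hGsub.trans (range_subset_range.mpr (by omega))
    exact mem_powersetCard.mpr ⟨rotate_subset_range _, (card_rotate hGsub' _).trans hGcard⟩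
  · rintro ⟨G, j⟩ hp ⟨G', j'⟩ hp' hGG'
    obtain ⟨hG, hj⟩ := mem_product.mp hp
    obtain ⟨hG', hj'⟩ := mem_product.mp hp'
    obtain ⟨hGsub, hGcard, hGball⟩ := mem_ballotSets.mp hG
    obtain ⟨hGsub', -, hGball'⟩ := mem_ballotSets.mp hG'
    simp only [mem_range] at hj hj'
    have hsub {G} (h : G ⊆ range (k * n)) : G ⊆ range N :=
      h.trans (range_subset_range.mpr (by omega))
    set B := rotate N (N - j) G
    have hlow : IsCyclicLowPoint k N B j := by
      rw [← isBallot_rotate_iff hN, hrot_rot (hsub hGsub) hj]; exact hGball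
    have hlow' : IsCyclicLowPoint k N B j' := by
      rw [← isBallot_rotate_iff hN, show B = _ from hGG', hrot_rot (hsub hGsub') hj']
      exact hGball'
    have hB : #B = n := (card_rotate (hsub hGsub) _).trans hGcard
    obtain ⟨_, -, huniq⟩ := existsUnique_isCyclicLowPoint hN (rotate_subset_range _) hB
    obtain rfl : j = j' := (huniq j ⟨hj, hlow⟩).trans (huniq j' ⟨hj', hlow'⟩).symm
    have hGG'' := congrArg (rotate N j) hGG'
    simp only [hrot_rot (hsub hGsub) hj, hrot_rot (hsub hGsub') hj] at hGG''
    rw [hGG'']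
  · intro B hB
    obtain ⟨hBsub, hBcard⟩ := mem_powersetCard.mp hB
    obtain ⟨j, ⟨hj, hlow⟩, -⟩ := existsUnique_isCyclicLowPoint hN hBsub hBcard
    have hball := (isBallot_rotate_iff hN j).mpr hlow
    have hcard : #(rotate N j B) = n := (card_rotate hBsub j).trans hBcard
    refine ⟨(rotate N j B, j), mem_product.mpr ⟨mem_ballotSets.mpr
      ⟨hball.subset_range hk hcard, hcard, hball⟩, mem_range.mpr hj⟩, ?_⟩
    dsimp only
    rw [rotate_rotate, rotate_of_dvd hBsub ⟨1, by omega⟩]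

theorem erase_mem_ballotSets {p : ℕ} {O : Finset ℕ} (hO : O ∈ ballotSets k (n + 1))
    (hp : p ∈ O) (hmax : ∀ m ∈ O, m ≤ p) : p ≤ k * n ∧ O.erase p ∈ ballotSets k n := by
  obtain ⟨hOsub, hOcard, hball⟩ := mem_ballotSets.mp hO
  have hpk := mem_range.mp (hOsub hp)
  have hcard : #(O.erase p) = n := by rw [card_erase_of_mem hp, hOcard, Nat.add_sub_cancel]
  have hlt {m} (hm : m ∈ O.erase p) : m < p := lt_of_le_of_ne (hmax m (mem_of_mem_erase hm))
    (ne_of_mem_erase hm)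
  have hbelow {t} (ht : p ≤ t) : O.erase p ∩ range t = O.erase p :=
    inter_eq_left.mpr fun m hm => mem_range.mpr ((hlt hm).trans_le ht)
  have habove {t} (ht : t ≤ p) : O.erase p ∩ range t = O ∩ range t := by
    rw [erase_inter, erase_eq_of_notMem (by simp [ht])]
  have hpn : p ≤ k * n := by
    have := hball p (by rw [mul_add_one] at hpk ⊢; omega)
    rwa [← habove le_rfl, hbelow le_rfl, hcard] at this
  refine ⟨hpn, mem_ballotSets.mpr ⟨fun m hm => mem_range.mpr ((hlt hm).trans_le hpn), hcard,
    fun t ht => ?_⟩⟩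
  rcases le_or_gt t p with htp | htp
  · rw [habove htp]
    exact hball t (by rw [mul_add_one]; omega)
  · rwa [hbelow htp.le, hcard]

end CycleLemma

section Noncrossing
variable {a b c d : Finset ℕ} {Q : Finset (Finset ℕ)} {S : Finset ℕ}

theorem Cross.symm (h : Cross a b) : Cross b a := Or.symm h

theorem Cross.mono (hac : a ⊆ c) (hbd : b ⊆ d) (h : Cross a b) : Cross c d := by
  rcases h with ⟨i, hi, k, hk, j, hj, l, hl, h⟩ | ⟨i, hi, k, hk, j, hj, l, hl, h⟩
  · exact Or.inl ⟨i, hac hi, k, hac hk, j, hbd hj, l, hbd hl, h⟩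
  · exact Or.inr ⟨i, hbd hi, k, hbd hk, j, hac hj, l, hac hl, h⟩

theorem cross_image_iff {f : ℕ → ℕ} {s : Set ℕ} (hf : StrictMonoOn f s) (ha : ↑a ⊆ s)
    (hb : ↑b ⊆ s) : Cross (a.image f) (b.image f) ↔ Cross a b := by
  have key {a b : Finset ℕ} (ha : ↑a ⊆ s) (hb : ↑b ⊆ s) :
      (∃ i ∈ a.image f, ∃ k ∈ a.image f, ∃ j ∈ b.image f, ∃ l ∈ b.image f,
        i < j ∧ j < k ∧ k < l) ↔ ∃ i ∈ a, ∃ k ∈ a, ∃ j ∈ b, ∃ l ∈ b, i < j ∧ j < k ∧ k < l := by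
    simp only [exists_mem_image]
    refine exists_congr fun i => and_congr_right fun hi => exists_congr fun k =>
      and_congr_right fun hk => exists_congr fun j => and_congr_right fun hj =>
      exists_congr fun l => and_congr_right fun hl => ?_
    rw [hf.lt_iff_lt (ha hi) (hb hj), hf.lt_iff_lt (hb hj) (ha hk), hf.lt_iff_lt (ha hk) (hb hl)]
  exact or_congr (key ha hb) (key hb ha)

theorem cross_pair_iff {i k j l : ℕ} (hik : i < k) (hjl : j < l) :
    Cross {i, k} {j, l} ↔ (i < j ∧ j < k ∧ k < l) ∨ (j < i ∧ i < l ∧ l < k) := by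
  simp only [Cross, exists_mem_insert, mem_singleton, exists_eq_left]
  constructor
  · rintro (h | h) <;> omega
  · rintro (h | h)
    · exact Or.inl (by omega)
    · exact Or.inr (by omega)

theorem subset_Ioo_or_disjoint_of_not_cross (hdisj : Disjoint b c) (hnc : ¬ Cross b c)
    {u v : ℕ} (hu : u ∈ c) (hv : v ∈ c) : b ⊆ Ioo u v ∨ Disjoint b (Ioo u v) := by
  by_contra! h
  obtain ⟨y, hyb, hy⟩ := not_subset.mp h.1
  obtain ⟨z, hzb, hz⟩ := not_disjoint_iff.mp h.2
  have hyu : y ≠ u := fun h => disjoint_left.mp hdisj hyb (h ▸ hu)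
  have hyv : y ≠ v := fun h => disjoint_left.mp hdisj hyb (h ▸ hv)
  rw [mem_Ioo] at hy hz
  apply hnc
  rcases Nat.lt_or_gt_of_ne hyu with hyu | hyu
  · exact Or.inl ⟨y, hyb, z, hzb, u, hu, v, hv, hyu, hz.1, hz.2⟩
  · exact Or.inr ⟨u, hu, v, hv, z, hzb, y, hyb, hz.1, hz.2, by omega⟩

theorem dvd_card_inter_Ioo_of_not_cross (hdisj : Disjoint b c) (hnc : ¬ Cross b c)
    {u v : ℕ} (hu : u ∈ c) (hv : v ∈ c) : #b ∣ #(b ∩ Ioo u v) := by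
  rcases subset_Ioo_or_disjoint_of_not_cross hdisj hnc hu hv with h | h
  · rw [inter_eq_left.mpr h]
  · rw [disjoint_iff_inter_eq_empty.mp h, card_empty]
    exact dvd_zero _

theorem IsNCPartitionOn.subset (hQ : IsNCPartitionOn Q S) (hb : b ∈ Q) : b ⊆ S :=
  fun x hx => (hQ.2.2.1 x).mpr ⟨b, hb, hx⟩

theorem IsNCPartitionOn.card_inter (hQ : IsNCPartitionOn Q S) (T : Finset ℕ) :
    #(S ∩ T) = ∑ b ∈ Q, #(b ∩ T) := by
  have : S ∩ T = Q.biUnion (· ∩ T) := by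
    ext x
    simp only [mem_inter, mem_biUnion, hQ.2.2.1 x]
    tauto
  rw [this, card_biUnion]
  exact fun b hb b' hb' hbb' =>
    (hQ.2.1 b hb b' hb' hbb').mono inter_subset_left inter_subset_left

theorem IsNCPartitionOn.card_eq_mul (hQ : IsNCPartitionOn Q S) {k : ℕ}
    (hk : ∀ b ∈ Q, #b = k) : #S = k * #Q := by
  have := hQ.card_inter S
  rw [inter_self, sum_congr rfl fun b hb => by rw [inter_eq_left.mpr (hQ.subset hb), hk b hb],
    sum_const, smul_eq_mul, mul_comm] at this
  exact this

/-- Between two points of a block that are consecutive in it lie only whole blocks. -/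
theorem IsNCPartitionOn.dvd_card_inter_Ioo (hQ : IsNCPartitionOn Q S) {k : ℕ}
    (hk : ∀ b ∈ Q, #b = k) (hc : c ∈ Q) {u v : ℕ} (hu : u ∈ c) (hv : v ∈ c)
    (hgap : Disjoint c (Ioo u v)) : k ∣ #(S ∩ Ioo u v) := by
  rw [hQ.card_inter]
  refine dvd_sum fun b hb => ?_
  by_cases hbc : b = c
  · rw [hbc, disjoint_iff_inter_eq_empty.mp hgap, card_empty]
    exact dvd_zero _
  · exact hk b hb ▸ dvd_card_inter_Ioo_of_not_cross (hQ.2.1 b hb c hc hbc)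
      (hQ.2.2.2 b hb c hc hbc) hu hv

theorem isNCMatchingOn_iff {M : Finset (Finset ℕ)} :
    IsNCMatchingOn M S ↔ IsNCPartitionOn M S ∧ ∀ b ∈ M, #b = 2 := by
  constructor
  · rintro ⟨⟨hcard, hdisj, hcover⟩, hnc⟩
    exact ⟨⟨fun b hb => card_pos.mp (by rw [hcard b hb]; omega), hdisj, hcover, hnc⟩, hcard⟩
  · rintro ⟨⟨-, hdisj, hcover, hnc⟩, hcard⟩
    exact ⟨⟨hcard, hdisj, hcover⟩, hnc⟩

theorem IsNCPartitionOn.image {f : ℕ → ℕ} (hQ : IsNCPartitionOn Q S)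
    (hf : StrictMonoOn f ↑S) : IsNCPartitionOn (Q.image (image f)) (S.image f) := by
  obtain ⟨hne, hdisj, hcover, hnc⟩ := hQ
  have hsub {b} (hb : b ∈ Q) : (↑b : Set ℕ) ⊆ ↑S := fun x hx => (hcover x).mpr ⟨b, hb, hx⟩
  refine ⟨?_, ?_, ?_, ?_⟩
  · simp only [mem_image, forall_exists_index, and_imp, forall_apply_eq_imp_iff₂]
    exact fun b hb => (hne b hb).image f
  · simp only [mem_image, forall_exists_index, and_imp, forall_apply_eq_imp_iff₂]
    intro b hb b' hb' hbb'
    have hbb' : b ≠ b' := fun h => hbb' (h ▸ rfl)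
    rw [disjoint_left]
    intro z hz hz'
    obtain ⟨x, hx, rfl⟩ := mem_image.mp hz
    obtain ⟨y, hy, hyx⟩ := mem_image.mp hz'
    exact disjoint_left.mp (hdisj b hb b' hb' hbb') hx
      (hf.injOn (hsub hb' hy) (hsub hb hx) hyx ▸ hy)
  · intro z
    simp only [mem_image, exists_exists_and_eq_and, hcover]
    exact ⟨fun ⟨x, ⟨b, hb, hx⟩, hxz⟩ => ⟨b, hb, x, hx, hxz⟩,
      fun ⟨b, hb, x, hx, hxz⟩ => ⟨x, ⟨b, hb, hx⟩, hxz⟩⟩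
  · simp only [mem_image, forall_exists_index, and_imp, forall_apply_eq_imp_iff₂]
    intro b hb b' hb' hbb'
    rw [cross_image_iff hf (hsub hb) (hsub hb')]
    exact hnc b hb b' hb' fun h => hbb' (h ▸ rfl)

theorem IsNCPartitionOn.card_image {f : ℕ → ℕ} (hQ : IsNCPartitionOn Q S)
    (hf : Set.InjOn f ↑S) : #(Q.image (Finset.image f)) = #Q :=
  card_image_of_injOn ((image_injOn_powerset_of_injOn hf).mono fun _ hb =>
    mem_powerset.mpr (hQ.subset hb))

theorem IsNCPartitionOn.erase (hQ : IsNCPartitionOn Q S) {c : Finset ℕ} (hc : c ∈ Q) :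
    IsNCPartitionOn (Q.erase c) (S \ c) := by
  obtain ⟨hne, hdisj, hcover, hnc⟩ := hQ
  refine ⟨fun b hb => hne b (mem_of_mem_erase hb),
    fun b hb b' hb' => hdisj b (mem_of_mem_erase hb) b' (mem_of_mem_erase hb'), fun x => ?_,
    fun b hb b' hb' => hnc b (mem_of_mem_erase hb) b' (mem_of_mem_erase hb')⟩
  simp only [mem_sdiff, hcover, mem_erase]
  constructor
  · rintro ⟨⟨b, hb, hxb⟩, hxc⟩
    exact ⟨b, ⟨fun h => hxc (h ▸ hxb), hb⟩, hxb⟩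
  · rintro ⟨b, ⟨hbc, hb⟩, hxb⟩
    exact ⟨⟨b, hb, hxb⟩, disjoint_left.mp (hdisj b hb c hc hbc) hxb⟩

theorem IsNCPartitionOn.insert (hQ : IsNCPartitionOn Q S) {c : Finset ℕ} (hc : c.Nonempty)
    (hdisj : Disjoint c S) (hnc : ∀ b ∈ Q, ¬ Cross c b) : IsNCPartitionOn (insert c Q) (S ∪ c) := by
  have hdisj' (b) (hb : b ∈ Q) : Disjoint c b := hdisj.mono_right (hQ.subset hb)
  refine ⟨?_, ?_, fun x => ?_, ?_⟩
  · simpa [hc] using hQ.1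
  · simp only [mem_insert, forall_eq_or_imp]
    refine ⟨⟨fun h => absurd rfl h, fun b hb _ => hdisj' b hb⟩,
      fun b hb => ⟨fun _ => (hdisj' b hb).symm, hQ.2.1 b hb⟩⟩
  · rw [mem_union, hQ.2.2.1 x, exists_mem_insert, or_comm]
  · simp only [mem_insert, forall_eq_or_imp]
    exact ⟨⟨fun h => absurd rfl h, fun b hb _ => hnc b hb⟩,
      fun b hb => ⟨fun _ h => hnc b hb h.symm, hQ.2.2.2 b hb⟩⟩

theorem not_cross_Icc_of_disjoint {p q : ℕ} {b : Finset ℕ} (h : Disjoint (Icc p q) b) :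
    ¬ Cross (Icc p q) b := by
  rintro (⟨i, hi, k, hk, j, hj, l, -, hij, hjk, -⟩ | ⟨i, -, k, hk, j, hj, l, hl, -, hjk, hkl⟩)
  · rw [mem_Icc] at hi hk
    exact disjoint_left.mp h (mem_Icc.mpr ⟨by omega, by omega⟩) hj
  · rw [mem_Icc] at hj hl
    exact disjoint_right.mp h hk (mem_Icc.mpr ⟨by omega, by omega⟩)

theorem IsNCPartitionOn.image_filter
    (hQ : IsNCPartitionOn Q S) (P : ℕ → Prop) [DecidablePred P]
    (hne : ∀ b ∈ Q, (b.filter P).Nonempty) : IsNCPartitionOn (Q.image (filter P)) (S.filter P) := by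
  obtain ⟨-, hdisj, hcover, hnc⟩ := hQ
  refine ⟨?_, ?_, fun x => ?_, ?_⟩
  · simpa only [mem_image, forall_exists_index, and_imp, forall_apply_eq_imp_iff₂] using hne
  · simp only [mem_image, forall_exists_index, and_imp, forall_apply_eq_imp_iff₂]
    exact fun b hb b' hb' hbb' => (hdisj b hb b' hb' fun h => hbb' (h ▸ rfl)).mono
      (filter_subset _ _) (filter_subset _ _)
  · simp only [mem_filter, hcover, exists_mem_image]
    exact ⟨fun ⟨⟨b, hb, hx⟩, hP⟩ => ⟨b, hb, hx, hP⟩, fun ⟨b, hb, hx, hP⟩ => ⟨⟨b, hb, hx⟩, hP⟩⟩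
  · simp only [mem_image, forall_exists_index, and_imp, forall_apply_eq_imp_iff₂]
    exact fun b hb b' hb' hbb' h => hnc b hb b' hb' (fun h' => hbb' (h' ▸ rfl))
      (h.mono (filter_subset _ _) (filter_subset _ _))

end Noncrossing

section BlockMinima
variable {n p : ℕ} {Q R : Finset (Finset ℕ)} {S b : Finset ℕ}

noncomputable def blockMin (b : Finset ℕ) : ℕ := if h : b.Nonempty then b.min' h else 0

noncomputable def minima (Q : Finset (Finset ℕ)) : Finset ℕ := Q.image blockMin

theorem blockMin_mem (h : b.Nonempty) : blockMin b ∈ b := by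
  rw [blockMin, dif_pos h]; exact b.min'_mem h

theorem blockMin_le {x : ℕ} (hx : x ∈ b) : blockMin b ≤ x := by
  rw [blockMin, dif_pos ⟨x, hx⟩]; exact b.min'_le x hx

theorem blockMin_eq {m : ℕ} (hm : m ∈ b) (hle : ∀ x ∈ b, m ≤ x) : blockMin b = m :=
  (blockMin_le hm).antisymm (hle _ (blockMin_mem ⟨m, hm⟩))

theorem blockMin_Icc {p q : ℕ} (h : p ≤ q) : blockMin (Icc p q) = p :=
  blockMin_eq (mem_Icc.mpr ⟨le_rfl, h⟩) fun _ hx => (mem_Icc.mp hx).1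

theorem blockMin_image {f : ℕ → ℕ} {s : Set ℕ} (hf : StrictMonoOn f s) (hb : ↑b ⊆ s)
    (hne : b.Nonempty) : blockMin (b.image f) = f (blockMin b) := by
  refine blockMin_eq (mem_image_of_mem f (blockMin_mem hne)) ?_
  simp only [mem_image, forall_exists_index, and_imp, forall_apply_eq_imp_iff₂]
  exact fun x hx => hf.monotoneOn (hb (blockMin_mem hne)) (hb hx) (blockMin_le hx)

theorem IsNCPartitionOn.blockMin_injOn (hQ : IsNCPartitionOn Q S) : Set.InjOn blockMin ↑Q := by
  intro b hb b' hb' h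
  by_contra hbb'
  exact disjoint_left.mp (hQ.2.1 b hb b' hb' hbb') (blockMin_mem (hQ.1 b hb))
    (h ▸ blockMin_mem (hQ.1 b' hb'))

theorem mem_ncQuadPartitions :
    Q ∈ ncQuadPartitions n ↔ IsNCPartitionOn Q (range (4 * n)) ∧ #Q = n ∧ ∀ b ∈ Q, #b = 4 := by
  rw [ncQuadPartitions, mem_filter, mem_powerset, and_iff_right_iff_imp]
  exact fun hQ b hb => mem_powerset.mpr (hQ.1.subset hb)

theorem minima_mem_ballotSets (hQ : Q ∈ ncQuadPartitions n) : minima Q ∈ ballotSets 4 n := by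
  obtain ⟨hQ, hcard, h4⟩ := mem_ncQuadPartitions.mp hQ
  refine mem_ballotSets.mpr ⟨?_, (card_image_of_injOn hQ.blockMin_injOn).trans hcard, ?_⟩
  · simp only [minima, image_subset_iff]
    exact fun b hb => hQ.subset hb (blockMin_mem (hQ.1 b hb))
  · intro t ht
    set Qt := Q.filter (fun b => blockMin b < t)
    have hmin : minima Q ∩ range t = Qt.image blockMin := by
      ext m
      simp only [minima, mem_inter, mem_image, mem_range, Qt, mem_filter]
      constructor
      · rintro ⟨⟨b, hb, rfl⟩, hlt⟩; exact ⟨b, ⟨hb, hlt⟩, rfl⟩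
      · rintro ⟨b, ⟨hb, hlt⟩, rfl⟩; exact ⟨⟨b, hb, rfl⟩, hlt⟩
    have hcover : range t ⊆ Qt.biUnion id := by
      intro x hx
      obtain ⟨b, hb, hxb⟩ := (hQ.2.2.1 x).mp (range_subset_range.mpr ht hx)
      exact mem_biUnion.mpr
        ⟨b, mem_filter.mpr ⟨hb, (blockMin_le hxb).trans_lt (mem_range.mp hx)⟩, hxb⟩
    rw [hmin, card_image_of_injOn (hQ.blockMin_injOn.mono (filter_subset _ _))]
    calc t = #(range t) := (card_range t).symm
      _ ≤ #(Qt.biUnion id) := card_le_card hcover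
      _ ≤ ∑ b ∈ Qt, #b := card_biUnion_le
      _ = 4 * #Qt := by
        rw [sum_congr rfl fun b hb => h4 b (mem_filter.mp hb).1, sum_const, smul_eq_mul, mul_comm]

/-- Anything skipped between the endpoints of this block would lie in a block starting earlier,
crossing it. -/
theorem eq_Icc_of_forall_minima_le (hQ : Q ∈ ncQuadPartitions n) {B : Finset ℕ} (hB : B ∈ Q)
    (hmax : ∀ m ∈ minima Q, m ≤ blockMin B) : B = Icc (blockMin B) (blockMin B + 3) := by
  obtain ⟨hQ, -, h4⟩ := mem_ncQuadPartitions.mp hQ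
  have hne := hQ.1 B hB
  set p := blockMin B
  set q := B.max' hne
  have hpB : p ∈ B := blockMin_mem hne
  have hqB : q ∈ B := B.max'_mem hne
  have hsub : B ⊆ Icc p q := fun x hx => mem_Icc.mpr ⟨blockMin_le hx, B.le_max' x hx⟩
  have hsup : Icc p q ⊆ B := by
    intro x hx
    by_contra hxB
    rw [mem_Icc] at hx
    obtain ⟨b, hb, hxb⟩ := (hQ.2.2.1 x).mp
      (mem_range.mpr (lt_of_le_of_lt hx.2 (mem_range.mp (hQ.subset hB hqB))))
    have hbB : b ≠ B := fun h => hxB (h ▸ hxb)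
    have hdisj := hQ.2.1 b hb B hB hbB
    have hmb : blockMin b < p := lt_of_le_of_ne (hmax _ (mem_image_of_mem _ hb))
      fun h => disjoint_left.mp hdisj (blockMin_mem (hQ.1 b hb)) (h ▸ hpB)
    have hxp : x ≠ p := fun h => hxB (h ▸ hpB)
    have hxq : x ≠ q := fun h => hxB (h ▸ hqB)
    exact hQ.2.2.2 b hb B hB hbB (Or.inl ⟨_, blockMin_mem (hQ.1 b hb), x, hxb, p, hpB, q, hqB,
      hmb, by omega, by omega⟩)
  have hBI : B = Icc p q := hsub.antisymm hsup
  have := h4 B hB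
  rw [hBI, Nat.card_Icc] at this
  rw [hBI, show q = p + 3 by omega]

def shiftUp (p x : ℕ) : ℕ := if x < p then x else x + 4

def shiftDown (p x : ℕ) : ℕ := if x < p then x else x - 4

theorem strictMono_shiftUp (p : ℕ) : StrictMono (shiftUp p) := by
  intro x y h; unfold shiftUp; split_ifs <;> omega

theorem strictMonoOn_shiftDown (p : ℕ) (S : Finset ℕ) :
    StrictMonoOn (shiftDown p) ↑(S \ Icc p (p + 3)) := by
  intro x hx y hy h
  simp only [coe_sdiff, Set.mem_sdiff, mem_coe, mem_Icc] at hx hy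
  unfold shiftDown; split_ifs <;> omega

theorem shiftUp_notMem_Icc (x : ℕ) : shiftUp p x ∉ Icc p (p + 3) := by
  rw [mem_Icc]; unfold shiftUp; split_ifs <;> omega

theorem shiftUp_shiftDown {x : ℕ} (hx : x ∉ Icc p (p + 3)) : shiftUp p (shiftDown p x) = x := by
  rw [mem_Icc] at hx; unfold shiftUp shiftDown; split_ifs <;> omega

theorem image_shiftUp_range_union (hp : p ≤ 4 * n) :
    (range (4 * n)).image (shiftUp p) ∪ Icc p (p + 3) = range (4 * (n + 1)) := by
  ext x
  simp only [mem_union, mem_image, mem_range, mem_Icc, shiftUp]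
  constructor
  · rintro (⟨y, hy, rfl⟩ | hx) <;> [split_ifs <;> omega; omega]
  · intro hx
    by_cases hxI : p ≤ x ∧ x ≤ p + 3
    · exact Or.inr hxI
    · exact Or.inl ⟨if x < p then x else x - 4, by split_ifs <;> omega, by split_ifs <;> omega⟩

theorem image_shiftDown_range_sdiff (hp : p ≤ 4 * n) :
    (range (4 * (n + 1)) \ Icc p (p + 3)).image (shiftDown p) = range (4 * n) := by
  rw [← image_shiftUp_range_union hp, union_sdiff_right, sdiff_eq_self_of_disjoint
    (disjoint_left.mpr fun _ hx => by
      obtain ⟨y, -, rfl⟩ := mem_image.mp hx; exact shiftUp_notMem_Icc y), image_image]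
  refine (image_congr fun x _ => ?_).trans image_id
  simp only [Function.comp_apply, shiftUp, shiftDown, id]; split_ifs <;> omega

noncomputable def extend (p : ℕ) (R : Finset (Finset ℕ)) : Finset (Finset ℕ) :=
  insert (Icc p (p + 3)) (R.image (image (shiftUp p)))

theorem extend_mem (hR : R ∈ ncQuadPartitions n) (hp : p ≤ 4 * n) :
    extend p R ∈ ncQuadPartitions (n + 1) := by
  obtain ⟨hR, hcard, h4⟩ := mem_ncQuadPartitions.mp hR
  have hmono := (strictMono_shiftUp p).strictMonoOn ↑(range (4 * n))
  have himg := hR.image hmono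
  have hdisj : Disjoint (Icc p (p + 3)) ((range (4 * n)).image (shiftUp p)) :=
    disjoint_right.mpr fun x hx => by
      obtain ⟨y, -, rfl⟩ := mem_image.mp hx; exact shiftUp_notMem_Icc y
  have hI : Icc p (p + 3) ∉ R.image (image (shiftUp p)) := fun h =>
    (nonempty_Icc.mpr (by omega)).ne_empty (disjoint_self.mp (hdisj.mono_right (himg.subset h)))
  refine mem_ncQuadPartitions.mpr ⟨?_, ?_, ?_⟩
  · rw [← image_shiftUp_range_union hp]
    exact himg.insert (nonempty_Icc.mpr (by omega)) hdisj fun b hb =>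
      not_cross_Icc_of_disjoint (hdisj.mono_right (himg.subset hb))
  · rw [extend, card_insert_of_notMem hI, hR.card_image hmono.injOn, hcard]
  · simp only [extend, mem_insert, mem_image, forall_eq_or_imp, forall_exists_index, and_imp,
      forall_apply_eq_imp_iff₂]
    exact ⟨by simp only [Nat.card_Icc]; omega, fun b hb =>
      (card_image_of_injective _ (strictMono_shiftUp p).injective).trans (h4 b hb)⟩

theorem minima_extend (hne : ∀ b ∈ R, b.Nonempty) (hlt : ∀ m ∈ minima R, m < p) :
    minima (extend p R) = insert p (minima R) := by
  rw [extend, minima, image_insert, blockMin_Icc (by omega), image_image, minima]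
  congr 1
  refine image_congr fun b hb => ?_
  rw [Function.comp_apply, blockMin_image ((strictMono_shiftUp p).strictMonoOn Set.univ)
    (Set.subset_univ _) (hne b hb), shiftUp, if_pos (hlt _ (mem_image_of_mem _ hb))]

theorem exists_eq_extend (hQ : Q ∈ ncQuadPartitions (n + 1)) (hp : p ∈ minima Q)
    (hmax : ∀ m ∈ minima Q, m ≤ p) :
    ∃ R ∈ ncQuadPartitions n, (∀ m ∈ minima R, m < p) ∧ Q = extend p R := by
  have hpn : p ≤ 4 * n := (erase_mem_ballotSets (minima_mem_ballotSets hQ) hp hmax).1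
  obtain ⟨B, hB, rfl⟩ := mem_image.mp hp
  have hIQ : Icc (blockMin B) (blockMin B + 3) ∈ Q := eq_Icc_of_forall_minima_le hQ hB hmax ▸ hB
  set p := blockMin B
  set I := Icc p (p + 3)
  obtain ⟨hQ, hcard, h4⟩ := mem_ncQuadPartitions.mp hQ
  have hE := hQ.erase hIQ
  have hmono := strictMonoOn_shiftDown p (range (4 * (n + 1)))
  have hR := hE.image hmono
  rw [image_shiftDown_range_sdiff hpn] at hR
  have hEsub {b} (hb : b ∈ Q.erase I) : (↑b : Set ℕ) ⊆ ↑(range (4 * (n + 1)) \ I) :=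
    coe_subset.mpr (hE.subset hb)
  refine ⟨(Q.erase I).image (image (shiftDown p)), mem_ncQuadPartitions.mpr ⟨hR, ?_, ?_⟩, ?_, ?_⟩
  · rw [hE.card_image hmono.injOn, card_erase_of_mem hIQ, hcard, Nat.add_sub_cancel]
  · simp only [mem_image, forall_exists_index, and_imp, forall_apply_eq_imp_iff₂]
    exact fun b hb => (card_image_of_injOn (hmono.injOn.mono (hEsub hb))).trans
      (h4 b (mem_of_mem_erase hb))
  · simp only [minima, mem_image, forall_exists_index, and_imp, forall_apply_eq_imp_iff₂]
    intro b hb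
    obtain ⟨hbI, hbQ⟩ := mem_erase.mp hb
    have hlt : blockMin b < p := lt_of_le_of_ne (hmax _ (mem_image_of_mem _ hbQ)) fun h =>
      disjoint_left.mp (hQ.2.1 b hbQ I hIQ hbI) (blockMin_mem (hQ.1 b hbQ))
        (h ▸ mem_Icc.mpr ⟨le_rfl, by omega⟩)
    rw [blockMin_image hmono (hEsub hb) (hQ.1 b hbQ), shiftDown, if_pos hlt]
    exact hlt
  · rw [extend, image_image, image_congr, image_id, insert_erase hIQ]
    intro b hb
    rw [Function.comp_apply, image_image, id]
    refine (image_congr fun x hx => ?_).trans image_id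
    exact shiftUp_shiftDown (mem_sdiff.mp (hE.subset hb hx)).2

theorem minima_injOn : ∀ n, Set.InjOn minima ↑(ncQuadPartitions n)
  | 0, Q, hQ, Q', hQ', _ => by
    rw [card_eq_zero.mp (mem_ncQuadPartitions.mp hQ).2.1,
      card_eq_zero.mp (mem_ncQuadPartitions.mp hQ').2.1]
  | n + 1, Q, hQ, Q', hQ', h => by
    obtain ⟨p, hp, hmax⟩ : ∃ p ∈ minima Q, ∀ m ∈ minima Q, m ≤ p :=
      ⟨_, max'_mem _ (card_pos.mp ((mem_ballotSets.mp (minima_mem_ballotSets hQ)).2.1 ▸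
        n.succ_pos)), le_max' _⟩
    obtain ⟨R, hR, hRlt, rfl⟩ := exists_eq_extend hQ hp hmax
    obtain ⟨R', hR', hR'lt, rfl⟩ := exists_eq_extend hQ' (h ▸ hp) (h ▸ hmax)
    rw [minima_extend (mem_ncQuadPartitions.mp hR).1.1 hRlt,
      minima_extend (mem_ncQuadPartitions.mp hR').1.1 hR'lt] at h
    have hRR' : minima R = minima R' := by
      rw [← erase_insert fun h => (hRlt _ h).false, h, erase_insert fun h => (hR'lt _ h).false]
    rw [minima_injOn n hR hR' hRR']

theorem exists_minima_eq : ∀ n, ∀ O ∈ ballotSets 4 n, ∃ Q ∈ ncQuadPartitions n, minima Q = O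
  | 0, O, hO => ⟨∅, by simp [mem_ncQuadPartitions, IsNCPartitionOn],
    by rw [card_eq_zero.mp (mem_ballotSets.mp hO).2.1]; rfl⟩
  | n + 1, O, hO => by
    have hne : O.Nonempty := card_pos.mp ((mem_ballotSets.mp hO).2.1 ▸ n.succ_pos)
    have hp := O.max'_mem hne
    obtain ⟨hpn, hO'⟩ := erase_mem_ballotSets hO hp (O.le_max' ·)
    obtain ⟨R, hR, hRO⟩ := exists_minima_eq n _ hO'
    have hlt : ∀ m ∈ minima R, m < O.max' hne := fun m hm => by
      rw [hRO] at hm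
      exact lt_of_le_of_ne (O.le_max' m (mem_of_mem_erase hm)) (ne_of_mem_erase hm)
    exact ⟨_, extend_mem hR hpn,
      by rw [minima_extend (mem_ncQuadPartitions.mp hR).1.1 hlt, hRO, insert_erase hp]⟩

theorem card_ncQuadPartitions (n : ℕ) : #(ncQuadPartitions n) = #(ballotSets 4 n) :=
  card_nbij minima (fun _ => minima_mem_ballotSets) (minima_injOn n)
    fun O hO => exists_minima_eq n O hO

end BlockMinima

section CrossingPairs
variable {a b c e o e' o' : Finset ℕ} {u v : ℕ}

theorem exists_lt_pair_of_card_eq_two {s : Finset ℕ} (h : #s = 2) :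
    ∃ i k, i < k ∧ s = {i, k} := by
  obtain ⟨i, k, hik, rfl⟩ := card_eq_two.mp h
  rcases Nat.lt_or_gt_of_ne hik with hik | hik
  · exact ⟨i, k, hik, rfl⟩
  · exact ⟨k, i, hik, pair_comm i k⟩

theorem mem_iff_mem_of_subset_or_disjoint {s t : Finset ℕ} (h : s ⊆ t ∨ Disjoint s t) {x y : ℕ}
    (hx : x ∈ s) (hy : y ∈ s) : x ∈ t ↔ y ∈ t := by
  rcases h with h | h
  · exact iff_of_true (h hx) (h hy)
  · exact iff_of_false (disjoint_left.mp h hx) (disjoint_left.mp h hy)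

theorem Cross.not_disjoint_Ioo (h : Cross a b) (ha : a ⊆ Ioo u v) : ¬ Disjoint b (Ioo u v) := by
  rcases h with ⟨i, hi, k, hk, j, hj, l, -, hij, hjk, -⟩ | ⟨i, -, k, hk, j, hj, l, hl, -, hjk, hkl⟩
  · have := mem_Ioo.mp (ha hi); have := mem_Ioo.mp (ha hk)
    exact not_disjoint_iff.mpr ⟨j, hj, mem_Ioo.mpr ⟨by omega, by omega⟩⟩
  · have := mem_Ioo.mp (ha hj); have := mem_Ioo.mp (ha hl)
    exact not_disjoint_iff.mpr ⟨k, hk, mem_Ioo.mpr ⟨by omega, by omega⟩⟩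

theorem union_subset_Ioo_or_disjoint (hab : Cross a b) (hac : Disjoint a c) (hbc : Disjoint b c)
    (hnac : ¬ Cross a c) (hnbc : ¬ Cross b c) (hu : u ∈ c) (hv : v ∈ c) :
    a ∪ b ⊆ Ioo u v ∨ Disjoint (a ∪ b) (Ioo u v) := by
  rcases subset_Ioo_or_disjoint_of_not_cross hac hnac hu hv with ha | ha <;>
    rcases subset_Ioo_or_disjoint_of_not_cross hbc hnbc hu hv with hb | hb
  · exact Or.inl (union_subset ha hb)
  · exact absurd hb (hab.not_disjoint_Ioo ha)
  · exact absurd ha (hab.symm.not_disjoint_Ioo hb)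
  · exact Or.inr (disjoint_union_left.mpr ⟨ha, hb⟩)

/-- The second union lies in a single one of the four arcs cut out by the first. -/
theorem not_cross_union (he : #e = 2) (ho : #o = 2) (he' : #e' = 2) (ho' : #o' = 2)
    (hcr : Cross e o) (hcr' : Cross e' o')
    (hee' : Disjoint e e' ∧ ¬ Cross e e') (heo' : Disjoint e o' ∧ ¬ Cross e o')
    (hoe' : Disjoint o e' ∧ ¬ Cross o e') (hoo' : Disjoint o o' ∧ ¬ Cross o o') :
    ¬ Cross (e ∪ o) (e' ∪ o') := by
  have key {e o e' o' : Finset ℕ} (he : #e = 2) (ho : #o = 2) (hcr : Cross e o)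
      (hcr' : Cross e' o') (hee' : Disjoint e' e ∧ ¬ Cross e' e)
      (heo' : Disjoint o' e ∧ ¬ Cross o' e) (hoe' : Disjoint e' o ∧ ¬ Cross e' o)
      (hoo' : Disjoint o' o ∧ ¬ Cross o' o) {i k j l : ℕ}
      (hi : i ∈ e ∪ o) (hk : k ∈ e ∪ o) (hj : j ∈ e' ∪ o') (hl : l ∈ e' ∪ o')
      (hij : i < j) (hjk : j < k) (hkl : k < l) : False := by
    obtain ⟨a₁, a₂, ha, rfl⟩ := exists_lt_pair_of_card_eq_two he
    obtain ⟨c₁, c₂, hc, rfl⟩ := exists_lt_pair_of_card_eq_two ho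
    rw [cross_pair_iff ha hc] at hcr
    have hA := mem_iff_mem_of_subset_or_disjoint (union_subset_Ioo_or_disjoint hcr' hee'.1 heo'.1
      hee'.2 heo'.2 (mem_insert_self a₁ {a₂}) (mem_insert_of_mem (mem_singleton_self a₂))) hj hl
    have hC := mem_iff_mem_of_subset_or_disjoint (union_subset_Ioo_or_disjoint hcr' hoe'.1 hoo'.1
      hoe'.2 hoo'.2 (mem_insert_self c₁ {c₂}) (mem_insert_of_mem (mem_singleton_self c₂))) hj hl
    have hlX : l ∉ ({a₁, a₂} ∪ {c₁, c₂} : Finset ℕ) := fun h =>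
      disjoint_left.mp (disjoint_union_right.mpr ⟨disjoint_union_left.mpr ⟨hee'.1, heo'.1⟩,
        disjoint_union_left.mpr ⟨hoe'.1, hoo'.1⟩⟩) hl h
    simp only [mem_Ioo, mem_union, mem_insert, mem_singleton, not_or] at hA hC hlX hi hk
    omega
  rintro (⟨i, hi, k, hk, j, hj, l, hl, h⟩ | ⟨i, hi, k, hk, j, hj, l, hl, h⟩)
  · exact key he ho hcr hcr' ⟨hee'.1.symm, fun h => hee'.2 h.symm⟩
      ⟨heo'.1.symm, fun h => heo'.2 h.symm⟩ ⟨hoe'.1.symm, fun h => hoe'.2 h.symm⟩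
      ⟨hoo'.1.symm, fun h => hoo'.2 h.symm⟩ hi hk hj hl h.1 h.2.1 h.2.2
  · exact key he' ho' hcr' hcr hee' hoe' heo' hoo' hi hk hj hl h.1 h.2.1 h.2.2

end CrossingPairs

section Basketballs
variable {n : ℕ} {Be Bo Q : Finset (Finset ℕ)} {B e o e' o' : Finset ℕ}

theorem En_eq_filter (n : ℕ) : En n = (range (4 * n)).filter (fun x => x % 2 = 0) := by
  ext x
  simp only [En, mem_image, mem_filter, mem_range]
  exact ⟨by rintro ⟨i, hi, rfl⟩; omega, fun h => ⟨x / 2, by omega, by omega⟩⟩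

theorem On_eq_filter (n : ℕ) : On n = (range (4 * n)).filter (fun x => x % 2 = 1) := by
  ext x
  simp only [On, mem_image, mem_filter, mem_range]
  exact ⟨by rintro ⟨i, hi, rfl⟩; omega, fun h => ⟨x / 2, by omega, by omega⟩⟩

theorem mem_En {x : ℕ} : x ∈ En n ↔ x < 4 * n ∧ x % 2 = 0 := by
  rw [En_eq_filter, mem_filter, mem_range]

theorem mem_On {x : ℕ} : x ∈ On n ↔ x < 4 * n ∧ x % 2 = 1 := by
  rw [On_eq_filter, mem_filter, mem_range]

theorem card_En (n : ℕ) : #(En n) = 2 * n := by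
  rw [En, card_image_of_injective _ fun a b h => by omega, card_range]

theorem card_On (n : ℕ) : #(On n) = 2 * n := by
  rw [On, card_image_of_injective _ fun a b h => by omega, card_range]

theorem mem_basketballs {P : Finset (Finset ℕ) × Finset (Finset ℕ)} :
    P ∈ basketballs n ↔ IsBasketball n P.1 P.2 := by
  rw [basketballs, mem_filter, mem_product, mem_powerset, mem_powerset, and_iff_right_iff_imp]
  intro hB
  have hsub {M : Finset (Finset ℕ)} {S : Finset ℕ} (hM : IsNCMatchingOn M S)
      (hS : ∀ x ∈ S, x < 4 * n) : M ⊆ (range (4 * n)).powerset := fun b hb =>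
    mem_powerset.mpr fun x hx => mem_range.mpr (hS x ((hM.1.2.2 x).mpr ⟨b, hb, hx⟩))
  exact ⟨hsub hB.1 fun x hx => (mem_En.mp hx).1, hsub hB.2.1 fun x hx => (mem_On.mp hx).1⟩

def evenPart (B : Finset ℕ) : Finset ℕ := B.filter (fun x => x % 2 = 0)

def oddPart (B : Finset ℕ) : Finset ℕ := B.filter (fun x => x % 2 = 1)

noncomputable def crossingPairs (Be Bo : Finset (Finset ℕ)) : Finset (Finset ℕ × Finset ℕ) :=
  (Be ×ˢ Bo).filter (fun p => Cross p.1 p.2)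

noncomputable def crossUnions (Be Bo : Finset (Finset ℕ)) : Finset (Finset ℕ) :=
  (crossingPairs Be Bo).image (fun p => p.1 ∪ p.2)

theorem mem_crossingPairs : (e, o) ∈ crossingPairs Be Bo ↔ e ∈ Be ∧ o ∈ Bo ∧ Cross e o := by
  rw [crossingPairs, mem_filter, mem_product, and_assoc]

theorem mem_crossUnions :
    B ∈ crossUnions Be Bo ↔ ∃ e ∈ Be, ∃ o ∈ Bo, Cross e o ∧ e ∪ o = B := by
  simp only [crossUnions, mem_image, mem_crossingPairs, Prod.exists, and_assoc, exists_and_left]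

namespace IsBasketball

theorem even_of_mem (hB : IsBasketball n Be Bo) (he : e ∈ Be) {x : ℕ} (hx : x ∈ e) :
    x % 2 = 0 :=
  (mem_En.mp ((hB.1.1.2.2 x).mpr ⟨e, he, hx⟩)).2

theorem odd_of_mem (hB : IsBasketball n Be Bo) (ho : o ∈ Bo) {x : ℕ} (hx : x ∈ o) :
    x % 2 = 1 :=
  (mem_On.mp ((hB.2.1.1.2.2 x).mpr ⟨o, ho, hx⟩)).2

theorem disjoint (hB : IsBasketball n Be Bo) (he : e ∈ Be) (ho : o ∈ Bo) : Disjoint e o :=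
  disjoint_left.mpr fun x hxe hxo => by
    have := hB.even_of_mem he hxe; have := hB.odd_of_mem ho hxo; omega

theorem evenPart_union (hB : IsBasketball n Be Bo) (he : e ∈ Be) (ho : o ∈ Bo) :
    evenPart (e ∪ o) = e := by
  rw [evenPart, filter_union, filter_true_of_mem fun _ => hB.even_of_mem he,
    filter_false_of_mem fun x hx => by have := hB.odd_of_mem ho hx; omega, union_empty]

theorem oddPart_union (hB : IsBasketball n Be Bo) (he : e ∈ Be) (ho : o ∈ Bo) :
    oddPart (e ∪ o) = o := by
  rw [oddPart, filter_union, filter_false_of_mem fun x hx => by have := hB.even_of_mem he hx; omega,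
    filter_true_of_mem fun _ => hB.odd_of_mem ho, empty_union]

theorem card_fst (hB : IsBasketball n Be Bo) : #Be = n := by
  have h := isNCMatchingOn_iff.mp hB.1
  have := h.1.card_eq_mul h.2
  rw [card_En] at this
  omega

theorem card_snd (hB : IsBasketball n Be Bo) : #Bo = n := by
  have h := isNCMatchingOn_iff.mp hB.2.1
  have := h.1.card_eq_mul h.2
  rw [card_On] at this
  omega

theorem exists_cross (hB : IsBasketball n Be Bo) (ho : o ∈ Bo) : ∃ e ∈ Be, Cross e o := by
  have hBe := isNCMatchingOn_iff.mp hB.1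
  have hBo := isNCMatchingOn_iff.mp hB.2.1
  obtain ⟨j, l, hjl, rfl⟩ := exists_lt_pair_of_card_eq_two (hBo.2 _ ho)
  have hjo : j ∈ ({j, l} : Finset ℕ) := mem_insert_self j {l}
  have hlo : l ∈ ({j, l} : Finset ℕ) := mem_insert_of_mem (mem_singleton_self l)
  have hj := hB.odd_of_mem ho hjo
  have hl := mem_On.mp ((hB.2.1.1.2.2 l).mpr ⟨_, ho, hlo⟩)
  by_contra! hnc
  have hodd : 2 ∣ #(On n ∩ Ioo j l) := hBo.1.dvd_card_inter_Ioo hBo.2 ho hjo hlo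
    (disjoint_left.mpr fun x hx => by simp only [mem_insert, mem_singleton] at hx; simp; omega)
  have heven : 2 ∣ #(En n ∩ Ioo j l) := by
    rw [hBe.1.card_inter]
    exact dvd_sum fun e he => hBe.2 e he ▸
      dvd_card_inter_Ioo_of_not_cross (hB.disjoint he ho) (hnc e he) hjo hlo
  have hsplit : Ioo j l = (En n ∩ Ioo j l) ∪ (On n ∩ Ioo j l) := by
    ext x; simp only [mem_union, mem_inter, mem_Ioo, mem_En, mem_On]; omega
  have hdisj : Disjoint (En n ∩ Ioo j l) (On n ∩ Ioo j l) := disjoint_left.mpr fun x hx hx' => by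
    simp only [mem_inter, mem_En, mem_On] at hx hx'; omega
  have := congrArg card hsplit
  rw [card_union_of_disjoint hdisj, Nat.card_Ioo] at this
  omega

theorem card_filter_cross_snd (hB : IsBasketball n Be Bo) (ho : o ∈ Bo) :
    #(Be.filter (Cross · o)) = 1 := by
  have hle (o) (ho : o ∈ Bo) : 1 ≤ #(Be.filter (Cross · o)) :=
    let ⟨e, he, h⟩ := hB.exists_cross ho
    card_pos.mpr ⟨e, mem_filter.mpr ⟨he, h⟩⟩
  refine ((sum_eq_sum_iff_of_le hle).mp ?_ o ho).symm
  rw [sum_const, smul_eq_mul, mul_one, hB.card_snd, ← hB.card_fst, card_eq_sum_ones]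
  simp only [card_filter]
  rw [sum_comm]
  exact sum_congr rfl fun e he => by rw [← card_filter, hB.2.2 e he]

theorem eq_of_cross_of_cross_fst (hB : IsBasketball n Be Bo) (he : e ∈ Be)
    (ho : o ∈ Bo) (ho' : o' ∈ Bo) (h : Cross e o) (h' : Cross e o') : o = o' :=
  card_le_one.mp (hB.2.2 e he).le o (mem_filter.mpr ⟨ho, h⟩) o' (mem_filter.mpr ⟨ho', h'⟩)

theorem eq_of_cross_of_cross_snd (hB : IsBasketball n Be Bo) (he : e ∈ Be)
    (he' : e' ∈ Be) (ho : o ∈ Bo) (h : Cross e o) (h' : Cross e' o) : e = e' :=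
  card_le_one.mp (hB.card_filter_cross_snd ho).le e (mem_filter.mpr ⟨he, h⟩) e'
    (mem_filter.mpr ⟨he', h'⟩)

theorem exists_cross_fst (hB : IsBasketball n Be Bo) (he : e ∈ Be) : ∃ o ∈ Bo, Cross e o := by
  obtain ⟨o, ho⟩ := card_pos.mp ((hB.2.2 e he).symm ▸ Nat.one_pos)
  exact ⟨o, (mem_filter.mp ho).1, (mem_filter.mp ho).2⟩

theorem ne_and_ne_of_union_ne (hB : IsBasketball n Be Bo) (he : e ∈ Be) (ho : o ∈ Bo)
    (h : Cross e o) (he' : e' ∈ Be) (ho' : o' ∈ Bo) (h' : Cross e' o') (hne : e ∪ o ≠ e' ∪ o') :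
    e ≠ e' ∧ o ≠ o' := by
  refine ⟨fun hee => hne ?_, fun hoo => hne ?_⟩
  · subst hee; rw [hB.eq_of_cross_of_cross_fst he ho ho' h h']
  · subst hoo; rw [hB.eq_of_cross_of_cross_snd he he' ho h h']

theorem isNCPartitionOn_crossUnions (hB : IsBasketball n Be Bo) :
    IsNCPartitionOn (crossUnions Be Bo) (range (4 * n)) := by
  have hBe := isNCMatchingOn_iff.mp hB.1
  have hBo := isNCMatchingOn_iff.mp hB.2.1
  refine ⟨fun C hC => ?_, fun C hC C' hC' hCC' => ?_, fun x => ?_, fun C hC C' hC' hCC' => ?_⟩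
  · obtain ⟨e, he, o, -, -, rfl⟩ := mem_crossUnions.mp hC
    exact (card_pos.mp (by rw [hBe.2 e he]; omega)).mono subset_union_left
  · obtain ⟨e, he, o, ho, h, rfl⟩ := mem_crossUnions.mp hC
    obtain ⟨e', he', o', ho', h', rfl⟩ := mem_crossUnions.mp hC'
    obtain ⟨hee', hoo'⟩ := hB.ne_and_ne_of_union_ne he ho h he' ho' h' hCC'
    exact disjoint_union_left.mpr ⟨disjoint_union_right.mpr ⟨hBe.1.2.1 e he e' he' hee',
      hB.disjoint he ho'⟩, disjoint_union_right.mpr ⟨(hB.disjoint he' ho).symm,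
      hBo.1.2.1 o ho o' ho' hoo'⟩⟩
  · rw [mem_range]
    constructor
    · intro hx
      rcases Nat.mod_two_eq_zero_or_one x with hx2 | hx2
      · obtain ⟨e, he, hxe⟩ := (hB.1.1.2.2 x).mp (mem_En.mpr ⟨hx, hx2⟩)
        obtain ⟨o, ho, h⟩ := hB.exists_cross_fst he
        exact ⟨e ∪ o, mem_crossUnions.mpr ⟨e, he, o, ho, h, rfl⟩, mem_union_left _ hxe⟩
      · obtain ⟨o, ho, hxo⟩ := (hB.2.1.1.2.2 x).mp (mem_On.mpr ⟨hx, hx2⟩)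
        obtain ⟨e, he, h⟩ := hB.exists_cross ho
        exact ⟨e ∪ o, mem_crossUnions.mpr ⟨e, he, o, ho, h, rfl⟩, mem_union_right _ hxo⟩
    · rintro ⟨C, hC, hxC⟩
      obtain ⟨e, he, o, ho, -, rfl⟩ := mem_crossUnions.mp hC
      rcases mem_union.mp hxC with hx | hx
      · exact (mem_En.mp ((hB.1.1.2.2 x).mpr ⟨e, he, hx⟩)).1
      · exact (mem_On.mp ((hB.2.1.1.2.2 x).mpr ⟨o, ho, hx⟩)).1
  · obtain ⟨e, he, o, ho, h, rfl⟩ := mem_crossUnions.mp hC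
    obtain ⟨e', he', o', ho', h', rfl⟩ := mem_crossUnions.mp hC'
    obtain ⟨hee', hoo'⟩ := hB.ne_and_ne_of_union_ne he ho h he' ho' h' hCC'
    exact not_cross_union (hBe.2 e he) (hBo.2 o ho) (hBe.2 e' he') (hBo.2 o' ho') h h'
      ⟨hBe.1.2.1 e he e' he' hee', hBe.1.2.2.2 e he e' he' hee'⟩
      ⟨hB.disjoint he ho', fun h'' => hoo' (hB.eq_of_cross_of_cross_fst he ho ho' h h'')⟩
      ⟨(hB.disjoint he' ho).symm,
        fun h'' => hee' (hB.eq_of_cross_of_cross_snd he he' ho h h''.symm)⟩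
      ⟨hBo.1.2.1 o ho o' ho' hoo', hBo.1.2.2.2 o ho o' ho' hoo'⟩

theorem card_crossUnions (hB : IsBasketball n Be Bo) : #(crossUnions Be Bo) = n := by
  have hinj : Set.InjOn (fun p : Finset ℕ × Finset ℕ => p.1 ∪ p.2) ↑(crossingPairs Be Bo) := by
    rintro ⟨e, o⟩ hp ⟨e', o'⟩ hp' heq
    obtain ⟨he, ho, -⟩ := mem_crossingPairs.mp hp
    obtain ⟨he', ho', -⟩ := mem_crossingPairs.mp hp'
    dsimp only at heq
    exact Prod.ext (by rw [← hB.evenPart_union he ho, heq, hB.evenPart_union he' ho'])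
      (by rw [← hB.oddPart_union he ho, heq, hB.oddPart_union he' ho'])
  rw [crossUnions, card_image_of_injOn hinj, ← hB.card_fst]
  refine card_nbij Prod.fst (fun _ hp => (mem_crossingPairs.mp hp).1) ?_ fun e he => ?_
  · rintro ⟨e, o⟩ hp ⟨e', o'⟩ hp' (rfl : e = e')
    obtain ⟨he, ho, h⟩ := mem_crossingPairs.mp hp
    obtain ⟨-, ho', h'⟩ := mem_crossingPairs.mp hp'
    rw [hB.eq_of_cross_of_cross_fst he ho ho' h h']
  · obtain ⟨o, ho, h⟩ := hB.exists_cross_fst he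
    exact ⟨(e, o), mem_crossingPairs.mpr ⟨he, ho, h⟩, rfl⟩

theorem crossUnions_mem (hB : IsBasketball n Be Bo) : crossUnions Be Bo ∈ ncQuadPartitions n := by
  refine mem_ncQuadPartitions.mpr ⟨hB.isNCPartitionOn_crossUnions, hB.card_crossUnions,
    fun C hC => ?_⟩
  obtain ⟨e, he, o, ho, -, rfl⟩ := mem_crossUnions.mp hC
  rw [card_union_of_disjoint (hB.disjoint he ho), hB.1.1.1 e he, hB.2.1.1.1 o ho]

theorem image_evenPart_crossUnions (hB : IsBasketball n Be Bo) :
    (crossUnions Be Bo).image evenPart = Be := by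
  ext e
  simp only [crossUnions, image_image, mem_image, mem_crossingPairs, Prod.exists,
    Function.comp_apply]
  constructor
  · rintro ⟨e', o, ⟨he', ho, -⟩, rfl⟩
    rwa [hB.evenPart_union he' ho]
  · intro he
    obtain ⟨o, ho, h⟩ := hB.exists_cross_fst he
    exact ⟨e, o, ⟨he, ho, h⟩, hB.evenPart_union he ho⟩

theorem image_oddPart_crossUnions (hB : IsBasketball n Be Bo) :
    (crossUnions Be Bo).image oddPart = Bo := by
  ext o
  simp only [crossUnions, image_image, mem_image, mem_crossingPairs, Prod.exists,
    Function.comp_apply]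
  constructor
  · rintro ⟨e, o', ⟨he, ho', -⟩, rfl⟩
    rwa [hB.oddPart_union he ho']
  · intro ho
    obtain ⟨e, he, h⟩ := hB.exists_cross ho
    exact ⟨e, o, ⟨he, ho, h⟩, hB.oddPart_union he ho⟩

end IsBasketball

theorem evenPart_union_oddPart (B : Finset ℕ) : evenPart B ∪ oddPart B = B := by
  rw [evenPart, oddPart, ← filter_or, filter_true_of_mem fun x _ => Nat.mod_two_eq_zero_or_one x]

theorem odd_sub_of_consecutive (hQ : Q ∈ ncQuadPartitions n) (hB : B ∈ Q) {u v : ℕ} (hu : u ∈ B)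
    (hv : v ∈ B) (huv : u < v) (hgap : ∀ x ∈ B, x ≤ u ∨ v ≤ x) : (v - u) % 2 = 1 := by
  obtain ⟨hQ, -, h4⟩ := mem_ncQuadPartitions.mp hQ
  have := hQ.dvd_card_inter_Ioo h4 hB hu hv (disjoint_left.mpr fun x hx hx' => by
    have := hgap x hx; rw [mem_Ioo] at hx'; omega)
  rw [inter_eq_right.mpr fun x hx => mem_range.mpr ((mem_Ioo.mp hx).2.trans
    (mem_range.mp (hQ.subset hB hv))), Nat.card_Ioo] at this
  omega

theorem evenPart_cross_oddPart (hQ : Q ∈ ncQuadPartitions n) (hB : B ∈ Q) :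
    #(evenPart B) = 2 ∧ #(oddPart B) = 2 ∧ Cross (evenPart B) (oddPart B) := by
  have h4 := (mem_ncQuadPartitions.mp hQ).2.2 B hB
  obtain ⟨f, hfB⟩ : ∃ f : Fin 4 ↪o ℕ, Set.range f = B := ⟨_, B.range_orderEmbOfFin h4⟩
  have hmem (x : ℕ) : x ∈ B ↔ x = f 0 ∨ x = f 1 ∨ x = f 2 ∨ x = f 3 := by
    rw [← mem_coe, ← hfB, Set.mem_range]
    simp [Fin.exists_fin_succ, eq_comm]
  have h01 : f 0 < f 1 := f.strictMono (by decide)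
  have h12 : f 1 < f 2 := f.strictMono (by decide)
  have h23 : f 2 < f 3 := f.strictMono (by decide)
  have hf (i : Fin 4) : f i ∈ B := mem_coe.mp (hfB ▸ Set.mem_range_self i)
  have g01 := odd_sub_of_consecutive hQ hB (hf 0) (hf 1) h01 fun x hx => by rw [hmem] at hx; omega
  have g12 := odd_sub_of_consecutive hQ hB (hf 1) (hf 2) h12 fun x hx => by rw [hmem] at hx; omega
  have g23 := odd_sub_of_consecutive hQ hB (hf 2) (hf 3) h23 fun x hx => by rw [hmem] at hx; omega
  rcases Nat.mod_two_eq_zero_or_one (f 0) with h0 | h0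
  · have he : evenPart B = {f 0, f 2} := by
      ext x; simp only [evenPart, mem_filter, hmem, mem_insert, mem_singleton]; omega
    have ho : oddPart B = {f 1, f 3} := by
      ext x; simp only [oddPart, mem_filter, hmem, mem_insert, mem_singleton]; omega
    rw [he, ho, card_pair (by omega), card_pair (by omega), cross_pair_iff (by omega) (by omega)]
    exact ⟨rfl, rfl, Or.inl ⟨h01, h12, h23⟩⟩
  · have he : evenPart B = {f 1, f 3} := by
      ext x; simp only [evenPart, mem_filter, hmem, mem_insert, mem_singleton]; omega
    have ho : oddPart B = {f 0, f 2} := by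
      ext x; simp only [oddPart, mem_filter, hmem, mem_insert, mem_singleton]; omega
    rw [he, ho, card_pair (by omega), card_pair (by omega), cross_pair_iff (by omega) (by omega)]
    exact ⟨rfl, rfl, Or.inr ⟨h01, h12, h23⟩⟩

theorem eq_of_cross_evenPart_oddPart (hQ : Q ∈ ncQuadPartitions n) {B B' : Finset ℕ}
    (hB : B ∈ Q) (hB' : B' ∈ Q) (h : Cross (evenPart B) (oddPart B')) : B = B' := by
  by_contra hBB'
  exact (mem_ncQuadPartitions.mp hQ).1.2.2.2 B hB B' hB' hBB'
    (h.mono (filter_subset _ _) (filter_subset _ _))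

theorem isBasketball_image (hQ : Q ∈ ncQuadPartitions n) :
    IsBasketball n (Q.image evenPart) (Q.image oddPart) := by
  have hQ' := (mem_ncQuadPartitions.mp hQ).1
  have hblock {B} (hB : B ∈ Q) := evenPart_cross_oddPart hQ hB
  refine ⟨isNCMatchingOn_iff.mpr ⟨?_, ?_⟩, isNCMatchingOn_iff.mpr ⟨?_, ?_⟩, ?_⟩
  · rw [En_eq_filter]
    exact hQ'.image_filter _ fun B hB =>
      card_pos.mp (show 0 < #(evenPart B) by rw [(hblock hB).1]; omega)
  · simpa only [mem_image, forall_exists_index, and_imp, forall_apply_eq_imp_iff₂] using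
      fun B hB => (hblock hB).1
  · rw [On_eq_filter]
    exact hQ'.image_filter _ fun B hB =>
      card_pos.mp (show 0 < #(oddPart B) by rw [(hblock hB).2.1]; omega)
  · simpa only [mem_image, forall_exists_index, and_imp, forall_apply_eq_imp_iff₂] using
      fun B hB => (hblock hB).2.1
  · simp only [mem_image, forall_exists_index, and_imp, forall_apply_eq_imp_iff₂]
    intro B hB
    rw [card_eq_one]
    refine ⟨oddPart B, eq_singleton_iff_unique_mem.mpr ⟨mem_filter.mpr
      ⟨mem_image_of_mem _ hB, (hblock hB).2.2⟩, fun o ho => ?_⟩⟩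
    obtain ⟨ho, h⟩ := mem_filter.mp ho
    obtain ⟨B', hB', rfl⟩ := mem_image.mp ho
    rw [eq_of_cross_evenPart_oddPart hQ hB hB' h]

theorem crossUnions_image (hQ : Q ∈ ncQuadPartitions n) :
    crossUnions (Q.image evenPart) (Q.image oddPart) = Q := by
  ext B
  simp only [mem_crossUnions, exists_mem_image]
  constructor
  · rintro ⟨B₁, hB₁, B₂, hB₂, h, rfl⟩
    rw [← eq_of_cross_evenPart_oddPart hQ hB₁ hB₂ h, evenPart_union_oddPart]
    exact hB₁
  · exact fun hB => ⟨B, hB, B, hB, (evenPart_cross_oddPart hQ hB).2.2, evenPart_union_oddPart B⟩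

theorem card_basketballs (n : ℕ) : #(basketballs n) = #(ncQuadPartitions n) := by
  refine card_nbij (fun B => crossUnions B.1 B.2)
    (fun B hB => (mem_basketballs.mp hB).crossUnions_mem) ?_ fun Q hQ => ?_
  · rintro ⟨Be, Bo⟩ hB ⟨Be', Bo'⟩ hB' h
    have hB := mem_basketballs.mp hB
    have hB' := mem_basketballs.mp hB'
    dsimp only at h hB hB'
    exact Prod.ext
      (by rw [← hB.image_evenPart_crossUnions, h, hB'.image_evenPart_crossUnions])
      (by rw [← hB.image_oddPart_crossUnions, h, hB'.image_oddPart_crossUnions])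
  · exact ⟨(Q.image evenPart, Q.image oddPart), mem_basketballs.mpr (isBasketball_image hQ),
      crossUnions_image hQ⟩

end Basketballs

theorem stmt_7 (n : ℕ) :
    (3 * n + 1) * (basketballs n).card = Nat.choose (4 * n) n ∧
    (basketballs n).card = (ncQuadPartitions n).card := by
  have hcard : #(basketballs n) = #(ballotSets 4 n) := by
    rw [card_basketballs, card_ncQuadPartitions]
  refine ⟨Nat.eq_of_mul_eq_mul_right (Nat.succ_pos (4 * n)) ?_, card_basketballs n⟩
  calc (3 * n + 1) * #(basketballs n) * (4 * n + 1)
      = (3 * n + 1) * (#(ballotSets 4 n) * (4 * n + 1)) := by rw [hcard, mul_assoc]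
    _ = (4 * n + 1).choose n * (4 * n + 1 - n) := by
      rw [card_ballotSets_mul (by norm_num), mul_comm, show 4 * n + 1 - n = 3 * n + 1 by omega]
    _ = (4 * n).choose n * (4 * n + 1) := (Nat.choose_mul_succ_eq (4 * n) n).symm
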